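/- arXiv:1211.6786 — 3 statements merged into one kernel-verified Lean document; each statement's English description precedes it below -/
import Mathlib

section
/- In a periodic parallel chip-firing game on a finite connected graph, every vertex fires the same number of times during one period: for all vertices v and w, Σ_{t=0}^{p−1} f(v,t) = Σ_{t=0}^{p−1} f(w,t), where p is the period. -/
/-!
Summing the update rule over one period, the chip counts telescope away, so the
numbers of firings `F v` satisfy `deg v * F v = ∑_{w ∼ v} F w`: the vector `F` lies
in the kernel of the graph Laplacian, which on a connected graph consists of the
constant vectors.
-/

open Finset

/-- `fire G c t v = 1` if vertex `v` fires at time `t`, i.e. has at least as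
many chips as its degree, and `0` otherwise. -/
def fire {V : Type*} [Fintype V] (G : SimpleGraph V) [DecidableRel G.Adj]
    (c : ℕ → V → ℕ) (t : ℕ) (v : V) : ℕ :=
  if G.degree v ≤ c t v then 1 else 0

/-- `c` is the sequence of chip configurations of a parallel chip-firing game on `G`. -/
def IsChipGame {V : Type*} [Fintype V] (G : SimpleGraph V) [DecidableRel G.Adj]
    (c : ℕ → V → ℕ) : Prop :=
  ∀ t v, c (t + 1) v + fire G c t v * G.degree v
      = c t v + ∑ w ∈ G.neighborFinset v, fire G c t w

theorem Finset.sum_range_succ_eq_sum_range_of_eq {M : Type*} [AddCancelCommMonoid M]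
    (g : ℕ → M) {p : ℕ} (hg : g p = g 0) :
    ∑ t ∈ range p, g (t + 1) = ∑ t ∈ range p, g t := by
  apply add_right_cancel (b := g 0)
  rw [← sum_range_succ', sum_range_succ, hg]

namespace SimpleGraph

open Matrix

variable {V : Type*} [Fintype V] {G : SimpleGraph V} [DecidableRel G.Adj]

theorem lapMatrix_mulVec_natCast_eq_zero [DecidableEq V] {f : V → ℕ}
    (hf : ∀ u, f u * G.degree u = ∑ x ∈ G.neighborFinset u, f x) :
    G.lapMatrix ℝ *ᵥ (fun u ↦ (f u : ℝ)) = 0 := by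
  ext u
  rw [lapMatrix_mulVec_apply, Pi.zero_apply, sub_eq_zero, mul_comm]
  exact_mod_cast hf u

theorem Connected.eq_of_mul_degree_eq_sum_neighborFinset (hconn : G.Connected) {f : V → ℕ}
    (hf : ∀ u, f u * G.degree u = ∑ x ∈ G.neighborFinset u, f x) (v w : V) :
    f v = f w := by
  classical
  have hker := lapMatrix_mulVec_natCast_eq_zero hf
  exact_mod_cast (lapMatrix_mulVec_eq_zero_iff_forall_reachable G).mp hker v w
    (hconn.preconnected v w)

end SimpleGraph

theorem IsChipGame.sum_fire_mul_degree {V : Type*} [Fintype V] {G : SimpleGraph V}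
    [DecidableRel G.Adj] {c : ℕ → V → ℕ} (hgame : IsChipGame G c) {p : ℕ}
    (hper : ∀ v, c p v = c 0 v) (u : V) :
    (∑ t ∈ range p, fire G c t u) * G.degree u
      = ∑ x ∈ G.neighborFinset u, ∑ t ∈ range p, fire G c t x := by
  have hsum := sum_congr rfl fun t (_ : t ∈ range p) ↦ hgame t u
  rwa [sum_add_distrib, sum_add_distrib, ← sum_mul, sum_comm (s := range p),
    sum_range_succ_eq_sum_range_of_eq (fun t ↦ c t u) (hper u), add_left_cancel_iff] at hsum

theorem equal_firing_counts_general {V : Type*} [Fintype V] (G : SimpleGraph V)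
    [DecidableRel G.Adj] (hconn : G.Connected) (c : ℕ → V → ℕ)
    (hgame : IsChipGame G c) (p : ℕ)
    (hper : ∀ t v, c (t + p) v = c t v) (v w : V) :
    ∑ t ∈ range p, fire G c t v = ∑ t ∈ range p, fire G c t w :=
  hconn.eq_of_mul_degree_eq_sum_neighborFinset
    (hgame.sum_fire_mul_degree fun u ↦ by simpa using hper 0 u) v w

/-- In a periodic parallel chip-firing game on a finite connected graph, every vertex
fires the same number of times during one period. -/
theorem equal_firing_counts {V : Type*} [Fintype V] (G : SimpleGraph V)
    [DecidableRel G.Adj] (hconn : G.Connected) (c : ℕ → V → ℕ)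
    (hgame : IsChipGame G c) (p : ℕ) (hp : 0 < p)
    (hper : ∀ t v, c (t + p) v = c t v) (v w : V) :
    ∑ t ∈ range p, fire G c t v = ∑ t ∈ range p, fire G c t w :=
  equal_firing_counts_general G hconn c hgame p hper v w
end

section
/- Let σ be a periodic motorized parallel chip-firing game on a tree T with motor set M. For every vertex v, every f ∈ {0,1}, and every interval [a,b] with a < b such that v has firing value f at all times in [a,b], there exists a motor m ∈ M such that m has firing value f at all times in [a−D, b−D], where D is the distance from m to v. -/
/-!
Rests of a vertex are firings of the dual game `(2 deg - 1 - c, 1 - f)`, so it suffices to trace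
clumps of firings. If some vertex fires forever, chip conservation over one period forces its
neighbours, hence every vertex, to fire forever. Otherwise every run of firings has a first time
`A`. A non-motor `u` firing on `[A, B]` after resting at `A - 1` goes from fewer than `deg u`
chips to at least `deg u` while firing `B - A` times during `[A - 1, B)`, so some neighbour fires
throughout `[A - 1, B - 1]`. In a tree this neighbour is one step farther from `v`, because the
neighbour towards `v` rests at the start of the run it passed on. The trace moves away from `v`
one edge per time step, so it ends at a motor.
-/
open Finset

/-- A motorized parallel chip-firing game on `G` with motor set `M`, indexed by
integer time. Chip counts are integers (motors may go negative); every vertex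
either fires (`f t v = 1`) or waits (`f t v = 0`); non-motor vertices fire exactly
when they have at least as many chips as their degree; and chips evolve by the
usual parallel chip-firing update rule. -/
def MotorizedGame {V : Type*} [Fintype V] (G : SimpleGraph V) [DecidableRel G.Adj]
    (M : Set V) (c : ℤ → V → ℤ) (f : ℤ → V → ℕ) : Prop :=
  (∀ t v, f t v = 0 ∨ f t v = 1) ∧
  (∀ t v, v ∉ M → f t v = if (G.degree v : ℤ) ≤ c t v then 1 else 0) ∧
  (∀ t v, c (t + 1) v
      = c t v + ∑ w ∈ G.neighborFinset v, (f t w : ℤ) - (f t v : ℤ) * G.degree v)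

lemma Function.Periodic.exists_lt_ne {α : Type*} {g : ℤ → α} {p : ℤ}
    (hg : Function.Periodic g p) (hp : 0 < p) {x : α} {s : ℤ} (hs : g s ≠ x) (T : ℤ) :
    ∃ τ < T, g τ ≠ x :=
  ⟨s - (|s - T| + 1) * p, by nlinarith [le_abs_self (s - T), abs_nonneg (s - T)], by
    simpa only [Int.cast_id] using (hg.sub_int_mul_eq (x := s) (|s - T| + 1)).symm ▸ hs⟩

lemma Int.exists_start_of_eq_on {α : Type*} {g : ℤ → α} {x : α} {a b : ℤ}
    (hne : ∃ τ < a, g τ ≠ x) (heq : ∀ t, a ≤ t → t ≤ b → g t = x) :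
    ∃ A ≤ a, g (A - 1) ≠ x ∧ ∀ t, A ≤ t → t ≤ b → g t = x := by
  obtain ⟨Z, ⟨hZa, hZ⟩, hmax⟩ :=
    Int.exists_greatest_of_bdd (P := fun z => z < a ∧ g z ≠ x) ⟨a, fun z hz => hz.1.le⟩ hne
  refine ⟨Z + 1, by omega, by simpa using hZ, fun t h1 h2 => ?_⟩
  by_cases hta : a ≤ t
  · exact heq t hta h2
  · by_contra hne
    have := hmax t ⟨by omega, hne⟩
    omega

namespace SimpleGraph

variable {V : Type*} {G : SimpleGraph V}

lemma Connected.dist_lt_card [Fintype V] (hG : G.Connected) (u v : V) :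
    G.dist u v < Fintype.card V := by
  obtain ⟨q, hq, hql⟩ := (hG u v).exists_path_of_dist
  exact hql ▸ hq.length_lt

lemma IsTree.eq_of_adj_of_dist_lt (hG : G.IsTree) {v x x' y : V} (hx : G.Adj x y)
    (hx' : G.Adj x' y) (h : G.dist x v < G.dist y v) (h' : G.dist x' v < G.dist y v) :
    x = x' := by
  classical
  obtain ⟨q, hq, -⟩ := (hG.connected v y).exists_path_of_dist
  suffices key : ∀ z, G.Adj z y → G.dist z v < G.dist y v → z = q.penultimate from
    (key x hx h).trans (key x' hx' h').symm
  intro z hz hzy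
  refine hG.isAcyclic.eq_penultimate_of_adj_end hq hz.symm ?_
  by_contra hzq
  obtain ⟨p, hp, hpl⟩ := (hG.connected v z).exists_path_of_dist
  have hy : y ∈ p.support :=
    hG.isAcyclic.mem_support_of_ne_mem_support_of_adj_of_isPath hp hq hz hzq
  have : G.dist v y ≤ G.dist v z :=
    hpl ▸ (dist_le (p.takeUntil y hy)).trans (p.length_takeUntil_le_length hy)
  rw [G.dist_comm (u := z), G.dist_comm (u := y)] at hzy
  omega

end SimpleGraph

section FiringCount

variable {V : Type*}

noncomputable def firingCount (f : ℤ → V → ℕ) (u : V) (s t : ℤ) : ℤ :=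
  ∑ τ ∈ Ico s t, (f τ u : ℤ)

variable {f : ℤ → V → ℕ} {u : V} {s t : ℤ}

lemma firingCount_self : firingCount f u s s = 0 := by simp [firingCount]

lemma firingCount_add_one (h : s ≤ t) :
    firingCount f u s (t + 1) = firingCount f u s t + f t u := by
  rw [firingCount, ← insert_Ico_right_eq_Ico_add_one h, sum_insert (by simp), add_comm]
  rfl

lemma firingCount_sub_one (h : s ≤ t) :
    firingCount f u (s - 1) t = f (s - 1) u + firingCount f u s t := by
  rw [firingCount, ← insert_Ico_left_eq_Ico_sub_one h, sum_insert (by simp)]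
  rfl

lemma firingCount_le (hf : ∀ τ, f τ u ≤ 1) (h : s ≤ t) : firingCount f u s t ≤ t - s := by
  calc firingCount f u s t ≤ ∑ _τ ∈ Ico s t, (1 : ℤ) :=
        sum_le_sum fun τ _ => by exact_mod_cast hf τ
    _ = t - s := by simp [h]

lemma firingCount_eq_sub_iff (hf : ∀ τ, f τ u ≤ 1) (h : s ≤ t) :
    firingCount f u s t = t - s ↔ ∀ τ, s ≤ τ → τ < t → f τ u = 1 := by
  have hsub : t - s = ∑ _τ ∈ Ico s t, (1 : ℤ) := by simp [h]
  rw [hsub, firingCount, sum_eq_sum_iff_of_le fun τ _ => by exact_mod_cast hf τ]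
  simp only [mem_Ico, Nat.cast_eq_one, and_imp]

end FiringCount

namespace MotorizedGame

variable {V : Type*} [Fintype V] {G : SimpleGraph V} [DecidableRel G.Adj] {M : Set V}
  {c : ℤ → V → ℤ} {f : ℤ → V → ℕ} {p : ℕ}

lemma firing_le_one (hgame : MotorizedGame G M c f) (t : ℤ) (u : V) : f t u ≤ 1 := by
  rcases hgame.1 t u with h | h <;> omega

lemma fires_iff (hgame : MotorizedGame G M c f) {u : V} (hu : u ∉ M) (t : ℤ) :
    f t u = 1 ↔ (G.degree u : ℤ) ≤ c t u := by
  rw [hgame.2.1 t u hu]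
  split_ifs with h <;> simp [h]

lemma chips_eq (hgame : MotorizedGame G M c f) (u : V) {s t : ℤ} (h : s ≤ t) :
    c t u = c s u + ∑ w ∈ G.neighborFinset u, firingCount f w s t
      - G.degree u * firingCount f u s t := by
  induction t, h using Int.leInduction with
  | base => simp [firingCount_self]
  | succ t hst ih =>
    rw [hgame.2.2, ih]
    simp only [firingCount_add_one hst, sum_add_distrib]
    ring

lemma fires_of_adj (hgame : MotorizedGame G M c f) (hp : 0 < p)
    (hperc : ∀ t u, c (t + p) u = c t u) {u w : V} (hu : ∀ t, f t u = 1) (huw : G.Adj u w)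
    (t : ℤ) : f t w = 1 := by
  have hle : t ≤ t + p := by omega
  have hcount : ∀ x, firingCount f x t (t + p) ≤ p := fun x => by
    simpa using firingCount_le (hgame.firing_le_one · x) hle
  have hu_count : firingCount f u t (t + p) = p := by
    simpa using (firingCount_eq_sub_iff (hgame.firing_le_one · u) hle).2 fun τ _ _ => hu τ
  have hsum : ∑ x ∈ G.neighborFinset u, firingCount f x t (t + p)
      = ∑ _x ∈ G.neighborFinset u, (p : ℤ) := by
    have := hgame.chips_eq u hle
    rw [hperc, hu_count] at this
    rw [sum_const, SimpleGraph.card_neighborFinset_eq_degree, nsmul_eq_mul]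
    linarith
  have hw := (sum_eq_sum_iff_of_le fun x _ => hcount x).1 hsum w (by simpa using huw)
  exact (firingCount_eq_sub_iff (hgame.firing_le_one · w) hle).1 (by simpa using hw) t le_rfl
    (by omega)

lemma fires_of_reachable (hgame : MotorizedGame G M c f) (hp : 0 < p)
    (hperc : ∀ t u, c (t + p) u = c t u) {u w : V} (hu : ∀ t, f t u = 1)
    (huw : G.Reachable u w) : ∀ t, f t w = 1 := by
  obtain ⟨q⟩ := huw
  induction q with
  | nil => exact hu
  | cons hadj _ ih => exact ih (hgame.fires_of_adj hp hperc hu hadj)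

lemma exists_adj_fires_of_run (hgame : MotorizedGame G M c f) {u : V} (hu : u ∉ M) {A B : ℤ}
    (hAB : A ≤ B) (hrest : f (A - 1) u ≠ 1) (hfire : ∀ t, A ≤ t → t ≤ B → f t u = 1) :
    ∃ w, G.Adj u w ∧ ∀ t, A - 1 ≤ t → t ≤ B - 1 → f t w = 1 := by
  by_contra! hnone
  have hA1 : A - 1 ≤ B := by omega
  have hu_count : firingCount f u (A - 1) B = B - A := by
    have h0 : f (A - 1) u = 0 := by have := hgame.1 (A - 1) u; omega
    rw [firingCount_sub_one hAB, h0, (firingCount_eq_sub_iff (hgame.firing_le_one · u) hAB).2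
      fun t h1 h2 => hfire t h1 h2.le]
    simp
  have hw_count : ∀ w ∈ G.neighborFinset u, firingCount f w (A - 1) B ≤ B - A := by
    intro w hw
    obtain ⟨t, h1, h2, ht⟩ := hnone w ((G.mem_neighborFinset u w).1 hw)
    have hle := firingCount_le (hgame.firing_le_one · w) hA1
    have hne : firingCount f w (A - 1) B ≠ B - (A - 1) := fun h =>
      ht ((firingCount_eq_sub_iff (hgame.firing_le_one · w) hA1).1 h t h1 (by omega))
    omega
  have hsum :
      ∑ w ∈ G.neighborFinset u, firingCount f w (A - 1) B ≤ G.degree u * (B - A) := by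
    simpa [mul_sub] using sum_le_sum hw_count
  have hB := (hgame.fires_iff hu B).1 (hfire B hAB le_rfl)
  have hA := (hgame.fires_iff hu (A - 1)).not.1 hrest
  have := hgame.chips_eq u hA1
  rw [hu_count] at this
  linarith

lemma dual (hgame : MotorizedGame G M c f) :
    MotorizedGame G M (fun t u => 2 * G.degree u - 1 - c t u) (fun t u => 1 - f t u) := by
  obtain ⟨hbin, hrule, hstep⟩ := hgame
  have hcast : ∀ t w, ((1 - f t w : ℕ) : ℤ) = 1 - f t w := fun t w => by
    rcases hbin t w with h | h <;> simp [h]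
  refine ⟨fun t u => by dsimp only; omega, fun t u hu => ?_, fun t u => ?_⟩
  · dsimp only
    rw [hrule t u hu]
    split_ifs <;> omega
  · simp only [hcast, sum_sub_distrib, sum_const, SimpleGraph.card_neighborFinset_eq_degree,
      nsmul_eq_mul, hstep]
    ring

end MotorizedGame

section Trace

variable {V : Type*} {G : SimpleGraph V} {f : ℤ → V → ℕ} {v : V} {a b : ℤ}

/-- The clump `[a, b]` of `v`, shifted back by `dist y v`, lies in a run of `y` that starts at
`A`. The condition on neighbours closer to `v` is what keeps the trace from turning back. -/
structure TracedRun (G : SimpleGraph V) (f : ℤ → V → ℕ) (v : V) (a b : ℤ) (y : V)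
    (A : ℤ) : Prop where
  start_le : A ≤ a - G.dist y v
  rests_before : f (A - 1) y ≠ 1
  fires : ∀ t, A ≤ t → t ≤ b - G.dist y v → f t y = 1
  closer_rests : ∀ x, G.Adj x y → G.dist x v < G.dist y v →
    ∃ t, A - 1 ≤ t ∧ t ≤ b - G.dist y v - 1 ∧ f t x ≠ 1

namespace TracedRun

lemma self {A : ℤ} (hA : A ≤ a) (hrest : f (A - 1) v ≠ 1)
    (hfire : ∀ t, A ≤ t → t ≤ b → f t v = 1) : TracedRun G f v a b v A where
  start_le := by simpa using hA
  rests_before := hrest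
  fires := by simpa using hfire
  closer_rests x _ hx := by simp at hx

variable [Fintype V] [DecidableRel G.Adj] {M : Set V} {c : ℤ → V → ℤ}

lemma exists_next (htree : G.IsTree) (hgame : MotorizedGame G M c f) (hab : a < b)
    (hrest : ∀ u T, ∃ τ < T, f τ u ≠ 1) {y : V} {A : ℤ} (h : TracedRun G f v a b y A)
    (hy : y ∉ M) : ∃ w A', G.dist w v = G.dist y v + 1 ∧ TracedRun G f v a b w A' := by
  have hA := h.start_le
  obtain ⟨w, hyw, hw⟩ := hgame.exists_adj_fires_of_run hy (by omega) h.rests_before h.fires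
  have hdist : G.dist w v = G.dist y v + 1 := by
    rw [G.dist_comm (u := w), G.dist_comm (u := y)]
    refine (htree.dist_eq_dist_add_one_of_adj v hyw).resolve_left fun hd => ?_
    obtain ⟨t, h1, h2, ht⟩ := h.closer_rests w hyw.symm
      (by rw [G.dist_comm (u := w), G.dist_comm (u := y)]; omega)
    exact ht (hw t h1 h2)
  obtain ⟨A', hA', hrest', hfire'⟩ := Int.exists_start_of_eq_on (hrest w (A - 1)) hw
  refine ⟨w, A', hdist, ⟨by push_cast [hdist]; omega, hrest', ?_, ?_⟩⟩
  · push_cast [hdist]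
    simpa [sub_sub] using hfire'
  · intro x hxw hx
    obtain rfl := htree.eq_of_adj_of_dist_lt hxw hyw hx (by omega)
    exact ⟨A - 1, by omega, by push_cast [hdist]; omega, h.rests_before⟩

theorem exists_motor (htree : G.IsTree) (hgame : MotorizedGame G M c f) (hab : a < b)
    (hrest : ∀ u T, ∃ τ < T, f τ u ≠ 1) (y : V) (A : ℤ) (h : TracedRun G f v a b y A) :
    ∃ m ∈ M, ∀ t, a - (G.dist m v : ℤ) ≤ t → t ≤ b - (G.dist m v : ℤ) →
      f t m = 1 := by
  by_cases hy : y ∈ M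
  · exact ⟨y, hy, fun t h1 h2 => h.fires t (by linarith [h.start_le]) h2⟩
  obtain ⟨w, A', hdist, hw⟩ := h.exists_next htree hgame hab hrest hy
  exact exists_motor htree hgame hab hrest w A' hw
termination_by Fintype.card V - G.dist y v
decreasing_by
  have := htree.connected.dist_lt_card w v
  omega

end TracedRun

end Trace

namespace MotorizedGame

variable {V : Type*} [Fintype V] {G : SimpleGraph V} [DecidableRel G.Adj] {M : Set V}
  {c : ℤ → V → ℤ} {f : ℤ → V → ℕ} {p : ℕ}

theorem exists_motor_of_fires (hgame : MotorizedGame G M c f) (htree : G.IsTree)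
    (hM : M.Nonempty) (hp : 0 < p) (hperc : ∀ t u, c (t + p) u = c t u)
    (hperf : ∀ t u, f (t + p) u = f t u) {v : V} {a b : ℤ} (hab : a < b)
    (hconst : ∀ t, a ≤ t → t ≤ b → f t v = 1) :
    ∃ m ∈ M, ∀ t, a - (G.dist m v : ℤ) ≤ t → t ≤ b - (G.dist m v : ℤ) →
      f t m = 1 := by
  by_cases hall : ∀ u t, f t u = 1
  · obtain ⟨m, hm⟩ := hM
    exact ⟨m, hm, fun t _ _ => hall m t⟩
  have hrest : ∀ u T, ∃ τ < T, f τ u ≠ 1 := by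
    push Not at hall
    obtain ⟨u₀, t₀, h₀⟩ := hall
    intro u T
    obtain ⟨s, hs⟩ : ∃ s, f s u ≠ 1 := by
      by_contra! hu
      exact h₀ (hgame.fires_of_reachable hp hperc hu (htree.connected u u₀) t₀)
    exact Function.Periodic.exists_lt_ne (fun t => hperf t u) (by omega) hs T
  obtain ⟨A, hAa, hA, hfire⟩ := Int.exists_start_of_eq_on (hrest v a) hconst
  exact TracedRun.exists_motor htree hgame hab hrest v A (.self hAa hA hfire)

end MotorizedGame

/-- In a periodic motorized game on a tree, every clump `[a,b]` of constant firing
value of a vertex is supported by a motor `m` on `[a−D, b−D]`, where `D` is the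
distance from `m` to `v`. -/
theorem clump_traces_to_motor {V : Type*} [Fintype V] (G : SimpleGraph V)
    [DecidableRel G.Adj] (htree : G.IsTree) (M : Set V) (hM : M.Nonempty)
    (c : ℤ → V → ℤ) (f : ℤ → V → ℕ) (hgame : MotorizedGame G M c f)
    (p : ℕ) (hp : 0 < p)
    (hperc : ∀ (t : ℤ) (v : V), c (t + p) v = c t v)
    (hperf : ∀ (t : ℤ) (v : V), f (t + p) v = f t v)
    (v : V) (fv : ℕ) (hfv : fv = 0 ∨ fv = 1) (a b : ℤ) (hab : a < b)
    (hconst : ∀ t, a ≤ t → t ≤ b → f t v = fv) :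
    ∃ m ∈ M, ∀ t, a - (G.dist m v : ℤ) ≤ t → t ≤ b - (G.dist m v : ℤ) →
      f t m = fv := by
  rcases hfv with rfl | rfl
  · obtain ⟨m, hm, hrests⟩ := hgame.dual.exists_motor_of_fires htree hM hp (v := v)
      (fun t u => by simp only [hperc]) (fun t u => by simp only [hperf]) hab
      (fun t h1 h2 => by simp [hconst t h1 h2])
    refine ⟨m, hm, fun t h1 h2 => ?_⟩
    have h := hrests t h1 h2
    have := hgame.1 t m
    omega
  · exact hgame.exists_motor_of_fires htree hM hp hperc hperf hab hconst
end

section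
/- For any two cyclic binary strings p, q of length n, the sum M(p,q) = Σ_{i=0}^{n−1} ( s_i(p)(p_i − q_{i−1}) + s_i(q)(q_i − p_{i−1}) − δ_i(p) − δ_i(q) ) is nonnegative, where s_i and δ_i are defined via the sector decomposition. -/
/-!
With `ε(b) = ±1` the sign of a binary digit, the potential
`Φ_i = |ε(p_{i-1}) + ε(q_{i-1}) + s_i(p) + s_i(q)|` grows from `i` to `i + 1` by at most twice the
`i`-th summand of `M(p, q)`. Since the sector signs are determined by the digits at `i - 1, i, i + 1`,
this is a finite check. Summing around the cycle, the increments of `Φ` telescope to `0`, so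
`2 M(p, q) ≥ 0`.
-/

open Finset

/-- `s` is the sector-sign function of the `n`-periodic binary string `p`:
`s i = 1` on 1-sectors and `s i = −1` on 0-sectors. Characterization: `s` is
`n`-periodic, `±1`-valued, equals the sign of `p i` whenever `p i = p (i−1)`
(two consecutive equal values lie in a sector of that type), and changes value
between `i` and `i+1` exactly at sector boundaries, i.e. when `p i = p (i−1)` and
`p (i+1) ≠ p i`. (For purely alternating strings `s` is constant of either sign.) -/
def IsSectorSign (n : ℕ) (p : ℤ → Bool) (s : ℤ → ℤ) : Prop :=
  (∀ i, s (i + n) = s i) ∧ (∀ i, s i = 1 ∨ s i = -1) ∧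
  (∀ i, p i = p (i - 1) → s i = if p i then 1 else -1) ∧
  (∀ i, s (i + 1) ≠ s i ↔ (p i = p (i - 1) ∧ p (i + 1) ≠ p i))

/-- The value of a binary digit as an integer. -/
def bval (b : Bool) : ℤ := if b then 1 else 0

def signOf (b : Bool) : ℤ := if b then 1 else -1

def IsSectorStep (a b c : Bool) (s s' : ℤ) : Prop :=
  (s = 1 ∨ s = -1) ∧ (s' = 1 ∨ s' = -1) ∧ (b = a → s = signOf b) ∧ (c = b → s' = signOf c) ∧
    (s' ≠ s ↔ b = a ∧ c ≠ b)

theorem IsSectorSign.isSectorStep {n : ℕ} {p : ℤ → Bool} {s : ℤ → ℤ} (h : IsSectorSign n p s)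
    (i : ℤ) : IsSectorStep (p (i - 1)) (p i) (p (i + 1)) (s i) (s (i + 1)) := by
  obtain ⟨-, hsign, hconst, hswitch⟩ := h
  exact ⟨hsign i, hsign (i + 1), hconst i,
    fun hc => hconst (i + 1) (by rwa [add_sub_cancel_right]), hswitch i⟩

set_option synthInstance.maxSize 1000 in
theorem abs_sub_abs_le_of_isSectorStep (a b c a' b' c' : Bool) (s s' t t' : ℤ)
    (hp : IsSectorStep a b c s s') (hq : IsSectorStep a' b' c' t t') :
    |signOf b + signOf b' + s' + t'| - |signOf a + signOf a' + s + t| ≤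
      2 * (s * (bval b - bval a') + t * (bval b' - bval a)
        - (if s' = s then 0 else 1) - (if t' = t then 0 else 1)) := by
  obtain ⟨hs | hs, hs' | hs', hp⟩ := hp <;> obtain ⟨ht | ht, ht' | ht', hq⟩ := hq <;>
    subst hs hs' ht ht' <;> revert a b c a' b' c' hp hq <;> decide

def sectorPotential (p q : ℤ → Bool) (s t : ℤ → ℤ) (i : ℤ) : ℤ :=
  |signOf (p (i - 1)) + signOf (q (i - 1)) + s i + t i|

section

variable {p q : ℤ → Bool} {s t : ℤ → ℤ}

theorem sectorPotential_add_period {n : ℕ} (hp : ∀ i, p (i + n) = p i)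
    (hq : ∀ i, q (i + n) = q i) (hs : ∀ i, s (i + n) = s i) (ht : ∀ i, t (i + n) = t i) (i : ℤ) :
    sectorPotential p q s t (i + n) = sectorPotential p q s t i := by
  rw [sectorPotential, sectorPotential, add_sub_right_comm, hp, hq, hs, ht]

theorem sectorPotential_succ_sub_le {n : ℕ} (hs : IsSectorSign n p s) (ht : IsSectorSign n q t)
    (i : ℤ) :
    sectorPotential p q s t (i + 1) - sectorPotential p q s t i ≤
      2 * (s i * (bval (p i) - bval (q (i - 1))) + t i * (bval (q i) - bval (p (i - 1)))
        - (if s (i + 1) = s i then 0 else 1) - (if t (i + 1) = t i then 0 else 1)) := by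
  simpa only [sectorPotential, add_sub_cancel_right] using
    abs_sub_abs_le_of_isSectorStep _ _ _ _ _ _ _ _ _ _ (hs.isSectorStep i) (ht.isSectorStep i)

end

theorem signed_sector_sum_nonneg_general (n : ℕ) (p q : ℤ → Bool)
    (hp : ∀ i, p (i + n) = p i) (hq : ∀ i, q (i + n) = q i)
    (sp sq : ℤ → ℤ) (hsp : IsSectorSign n p sp) (hsq : IsSectorSign n q sq) :
    0 ≤ ∑ i ∈ range n,
        (sp i * (bval (p i) - bval (q (i - 1)))
          + sq i * (bval (q i) - bval (p (i - 1)))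
          - (if sp (i + 1) = sp i then 0 else 1)
          - (if sq (i + 1) = sq i then 0 else 1)) := by
  set Φ : ℕ → ℤ := fun i => sectorPotential p q sp sq i
  have telescope : ∑ i ∈ range n, (Φ (i + 1) - Φ i) = 0 := by
    rw [sum_range_sub, sub_eq_zero]
    simpa [Φ] using sectorPotential_add_period hp hq hsp.1 hsq.1 0
  refine nonneg_of_mul_nonneg_right ?_ two_pos
  calc (0 : ℤ) = ∑ i ∈ range n, (Φ (i + 1) - Φ i) := telescope.symm
    _ ≤ _ := sum_le_sum fun i _ => by simpa [Φ] using sectorPotential_succ_sub_le hsp hsq i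
    _ = _ := (mul_sum _ _ _).symm

/-- For any two cyclic binary strings `p, q` of length `n`, the signed sum
`M(p,q) = Σ_i (s_i(p)(p_i − q_{i−1}) + s_i(q)(q_i − p_{i−1}) − δ_i(p) − δ_i(q))`
is nonnegative, where `δ_i` indicates a sector switch between `i` and `i+1`. -/
theorem signed_sector_sum_nonneg (n : ℕ) (hn : 1 ≤ n) (p q : ℤ → Bool)
    (hp : ∀ i, p (i + n) = p i) (hq : ∀ i, q (i + n) = q i)
    (sp sq : ℤ → ℤ) (hsp : IsSectorSign n p sp) (hsq : IsSectorSign n q sq) :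
    0 ≤ ∑ i ∈ range n,
        (sp i * (bval (p i) - bval (q (i - 1)))
          + sq i * (bval (q i) - bval (p (i - 1)))
          - (if sp (i + 1) = sp i then 0 else 1)
          - (if sq (i + 1) = sq i then 0 else 1)) :=
  signed_sector_sum_nonneg_general n p q hp hq sp sq hsp hsq
end
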